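/- arXiv:1502.00198 — 3 statements merged into one kernel-verified Lean document; each statement's English description precedes it below -/
import Mathlib

section
/- Let r ≥ 1, k ≥ 1, let X₁, …, X_k be skew-symmetric 2r×2r complex matrices (Xᵢᵀ = −Xᵢ), and let S be a 2r×2r complex matrix with Sᵀ S = 1 and det S = 1. Let (w₁,…,w_r) be an ordered partition of {1,…,k} into r nonempty sequences and define F(X₁,…,X_k) := ∑_{τ ∈ S_{2r}} sign(τ) ∏_{i=1}^{r} (X_{w_i(1)} X_{w_i(2)} ⋯ X_{w_i(ℓ_i)})_{τ(i), τ(r+i)}, with ℓ_i the length of w_i. Then F(S X₁ S⁻¹, …, S X_k S⁻¹) = F(X₁, …, X_k). -/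
/-!
Write `F` as the contraction of the Levi-Civita symbol `ε` with the tensor
`T(x) = ∏ᵢ Pᵢ(x_i, x_{r+i})` built from the chain products `Pᵢ`. Since `S⁻¹ = Sᵀ`, conjugating
the arguments by `S` replaces each `Pᵢ` by `S Pᵢ Sᵀ`, that is, `T` by `S^{⊗2r} T`. Moving
`S^{⊗2r}` onto `ε` gives `det S • ε`: for a multi-index `y`, the alternating sum
`∑_τ sign τ ∏_p S_{τ p, y p}` is the determinant of the columns `y` of `S`, which vanishes unless
`y` is a permutation `σ`, and then equals `sign σ · det S`.
-/

open Finset Equiv Matrix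

theorem List.prod_map_conj {M ι : Type*} [Monoid M] {u v : M} (hvu : v * u = 1) (huv : u * v = 1)
    (f : ι → M) (l : List ι) :
    (l.map fun j => u * f j * v).prod = u * (l.map f).prod * v := by
  induction l with
  | nil => simp [huv]
  | cons a t ih =>
    rw [List.map_cons, List.prod_cons, ih, List.map_cons, List.prod_cons]
    simp only [mul_assoc]
    rw [← mul_assoc v u, hvu, one_mul]

section LeviCivita

variable {n κ R : Type*} [Fintype n] [DecidableEq n] [Fintype κ] [CommRing R]

/- A tensor of rank `card n` over `n`-dimensional space is a function `(n → n) → R`, its index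
slots being labelled by `n` itself. -/
def leviCivitaContract (T : (n → n) → R) : R :=
  ∑ τ : Perm n, (Perm.sign τ : R) * T τ

def tensorTransform (S : Matrix n n R) (T : (n → n) → R) : (n → n) → R :=
  fun x => ∑ y : n → n, (∏ p, S (x p) (y p)) * T y

def pairingTensor (e : κ ⊕ κ ≃ n) (M : κ → Matrix n n R) : (n → n) → R :=
  fun x => ∏ i, M i (x (e (.inl i))) (x (e (.inr i)))

theorem sum_fun_eq_sum_perm {M : Type*} [AddCommMonoid M] (f : (n → n) → M)
    (hf : ∀ y, ¬ Function.Injective y → f y = 0) :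
    ∑ y, f y = ∑ σ : Perm n, f σ := by
  let coe : Perm n ↪ (n → n) := ⟨fun σ => σ, DFunLike.coe_injective⟩
  rw [show ∑ σ : Perm n, f σ = ∑ y ∈ univ.map coe, f y from (sum_map univ coe f).symm]
  refine (sum_subset (subset_univ _) fun y _ hy => hf y fun hinj => hy ?_).symm
  exact mem_map.2
    ⟨Equiv.ofBijective y (Finite.injective_iff_bijective.1 hinj), mem_univ _, rfl⟩

theorem leviCivitaContract_tensorTransform (S : Matrix n n R) (T : (n → n) → R) :
    leviCivitaContract (tensorTransform S T) = S.det * leviCivitaContract T := by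
  have hminor : ∀ y : n → n, ∑ τ : Perm n, (Perm.sign τ : R) * ∏ p, S (τ p) (y p)
      = (S.submatrix id y).det := fun y => by rw [det_apply']; rfl
  calc leviCivitaContract (tensorTransform S T)
      = ∑ y : n → n, T y * (S.submatrix id y).det := by
        simp only [leviCivitaContract, tensorTransform, mul_sum, ← hminor]
        rw [sum_comm]
        exact sum_congr rfl fun y _ => sum_congr rfl fun τ _ => by ring
    _ = ∑ σ : Perm n, T σ * (S.submatrix id σ).det := by
        refine sum_fun_eq_sum_perm _ fun y hy => ?_
        obtain ⟨p, q, hpq, hne⟩ : ∃ p q, y p = y q ∧ p ≠ q := by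
          simpa [Function.Injective] using hy
        rw [det_zero_of_column_eq hne fun i => by simp [hpq], mul_zero]
    _ = S.det * leviCivitaContract T := by
        simp only [leviCivitaContract, det_permute', mul_sum]
        exact sum_congr rfl fun σ _ => by ring

omit [DecidableEq n] in
theorem mul_mul_transpose_apply (S N : Matrix n n R) (p q : n) :
    (S * N * Sᵀ) p q = ∑ a, ∑ b, S p a * N a b * S q b := by
  simp only [mul_apply, sum_mul, transpose_apply]
  exact sum_comm

theorem sum_fun_eq_sum_sum_sumElim [DecidableEq κ] {M : Type*} [AddCommMonoid M]
    (e : κ ⊕ κ ≃ n) (F : (n → n) → M) :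
    ∑ y : n → n, F y = ∑ u : κ → n, ∑ v : κ → n, F (Sum.elim u v ∘ e.symm) := by
  rw [← Fintype.sum_prod_type']
  exact (Fintype.sum_equiv ((sumArrowEquivProdArrow κ κ n).symm.trans (e.arrowCongr (.refl n)))
    _ _ fun _ => rfl).symm

theorem tensorTransform_pairingTensor (e : κ ⊕ κ ≃ n) (S : Matrix n n R)
    (M : κ → Matrix n n R) :
    tensorTransform S (pairingTensor e M) = pairingTensor e fun i => S * M i * Sᵀ := by
  classical
  funext x
  have hsplit : ∀ y : n → n, ∏ p, S (x p) (y p)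
      = (∏ i, S (x (e (.inl i))) (y (e (.inl i)))) * ∏ i, S (x (e (.inr i))) (y (e (.inr i))) :=
    fun y => (Fintype.prod_equiv e (fun s => S (x (e s)) (y (e s))) _ fun _ => rfl).symm.trans
      (Fintype.prod_sum_type _)
  simp only [tensorTransform, pairingTensor, mul_mul_transpose_apply, Fintype.prod_sum, hsplit]
  rw [sum_fun_eq_sum_sum_sumElim e]
  refine sum_congr rfl fun u _ => sum_congr rfl fun v _ => ?_
  simp only [Function.comp_apply, symm_apply_apply, Sum.elim_inl, Sum.elim_inr,
    prod_mul_distrib]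
  ring

end LeviCivita

-- Sends `inl i ↦ i` and `inr i ↦ r + i` definitionally, matching the indices in `F`.
def finSumFinEquivTwoMul (r : ℕ) : Fin r ⊕ Fin r ≃ Fin (2 * r) :=
  finSumFinEquiv.trans (finCongr (two_mul r).symm)

theorem leviCivita_chain_contraction_conj_invariant (r k : ℕ)
    (X : Fin k → Matrix (Fin (2 * r)) (Fin (2 * r)) ℂ)
    (S : Matrix (Fin (2 * r)) (Fin (2 * r)) ℂ)
    (hS : S.transpose * S = 1) (hdet : S.det = 1)
    (w : Fin r → List (Fin k)) :
    (∑ τ : Equiv.Perm (Fin (2 * r)), ((Equiv.Perm.sign τ : ℤ) : ℂ) *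
        ∏ i : Fin r,
          ((w i).map fun j => S * X j * S⁻¹).prod
            (τ ⟨(i : ℕ), by have := i.2; omega⟩) (τ ⟨r + (i : ℕ), by have := i.2; omega⟩))
      = ∑ τ : Equiv.Perm (Fin (2 * r)), ((Equiv.Perm.sign τ : ℤ) : ℂ) *
          ∏ i : Fin r,
            ((w i).map X).prod
              (τ ⟨(i : ℕ), by have := i.2; omega⟩)
              (τ ⟨r + (i : ℕ), by have := i.2; omega⟩) := by
  have hconj : ∀ i, ((w i).map fun j => S * X j * S⁻¹).prod = S * ((w i).map X).prod * Sᵀ :=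
    fun i => by
      rw [inv_eq_left_inv hS]
      exact List.prod_map_conj hS (mul_eq_one_comm.mp hS) X (w i)
  simp only [hconj]
  have key := leviCivitaContract_tensorTransform S
    (pairingTensor (finSumFinEquivTwoMul r) fun i => ((w i).map X).prod)
  rwa [tensorTransform_pairingTensor, hdet, one_mul] at key
end

section
/- Let r ≥ 1, let J be the standard 2r×2r complex symplectic matrix (invertible with Jᵀ = −J, block form [[0, −1],[1, 0]]), and let k be an odd positive integer. Let X₁, …, X_k be 2r×2r complex matrices satisfying Xᵢᵀ J = −J Xᵢ for each i. Then ∑_{σ ∈ S_k} tr(X_{σ(1)} X_{σ(2)} ⋯ X_{σ(k)}) = 0, where the sum is over all permutations σ of {1,…,k}. -/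
/-!
STATEMENT 8: for matrices in the symplectic Lie algebra `sp(2r,ℂ)` (with respect to
the standard symplectic matrix `J`) and odd `k`, the fully symmetrized trace of
degree `k` vanishes: `∑_{σ ∈ S_k} tr (X_{σ(1)} X_{σ(2)} ⋯ X_{σ(k)}) = 0`.
-/

/-- The standard `2r × 2r` complex symplectic matrix, with block form `[[0, -1], [1, 0]]`. -/
noncomputable def stdSymplecticMatrix (r : ℕ) : Matrix (Fin (2 * r)) (Fin (2 * r)) ℂ :=
  Matrix.reindex (((finSumFinEquiv : Fin r ⊕ Fin r ≃ Fin (r + r)).trans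
      (finCongr (by omega))) : Fin r ⊕ Fin r ≃ Fin (2 * r))
    ((finSumFinEquiv : Fin r ⊕ Fin r ≃ Fin (r + r)).trans (finCongr (by omega)))
    (Matrix.fromBlocks 0 (-1) 1 0)

/-!
If `Aᵢᵀ J = -J Aᵢ`, then `(A₁ ⋯ Aₖ)ᵀ J = (-1)ᵏ J Aₖ ⋯ A₁`, so for invertible `J` the trace of a
product of `k` such matrices changes by `(-1)ᵏ` when the order of the factors is reversed.
For odd `k`, precomposing `σ` with the reversal of `Fin k` therefore negates each summand while
permuting the summands, so the sum equals its own negative.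
-/

open Matrix Equiv

theorem List.ofFn_comp_rev {α : Type*} {k : ℕ} (f : Fin k → α) :
    List.ofFn (fun i => f i.rev) = (List.ofFn f).reverse := by
  refine List.ext_getElem (by simp) fun i hi _ => ?_
  rw [List.length_ofFn] at hi
  simp only [List.getElem_ofFn, List.getElem_reverse, List.length_ofFn]
  congr 1
  ext
  simp only [Fin.val_rev]
  omega

namespace Matrix

variable {R n : Type*} [CommRing R] [Fintype n]

theorem IsAdjointPair.mul {J A A' B B' : Matrix n n R} (hA : IsAdjointPair J J A A')
    (hB : IsAdjointPair J J B B') : IsAdjointPair J J (A * B) (B' * A') := by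
  unfold IsAdjointPair at *
  rw [transpose_mul, Matrix.mul_assoc, hA, ← Matrix.mul_assoc, hB, Matrix.mul_assoc]

theorem IsAdjointPair.trace_eq [DecidableEq n] {J A A' : Matrix n n R} (hJ : IsUnit J)
    (h : IsAdjointPair J J A A') : trace A = trace A' := by
  have hdet : IsUnit J.det := (isUnit_iff_isUnit_det J).1 hJ
  calc trace A = trace (Aᵀ * J * J⁻¹) := by
        rw [Matrix.mul_assoc, mul_nonsing_inv J hdet, Matrix.mul_one, trace_transpose]
    _ = trace (J⁻¹ * (J * A')) := by rw [← h, trace_mul_comm]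
    _ = trace A' := by rw [← Matrix.mul_assoc, nonsing_inv_mul J hdet, Matrix.one_mul]

theorem isAdjointPair_list_prod_reverse [DecidableEq n] {J : Matrix n n R}
    {L : List (Matrix n n R)} (hL : ∀ A ∈ L, J.IsSkewAdjoint A) :
    IsAdjointPair J J L.reverse.prod ((-1 : R) ^ L.length • L.prod) := by
  induction L with
  | nil => simp [IsAdjointPair]
  | cons A L ih =>
    have hA : J.IsSkewAdjoint A := hL A List.mem_cons_self
    have hL' := ih fun B hB => hL B (List.mem_cons_of_mem A hB)
    have hsign :
        (-1 : R) ^ (L.length + 1) • (A * L.prod) = -A * ((-1 : R) ^ L.length • L.prod) := by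
      rw [pow_succ, mul_neg_one, neg_smul, Matrix.neg_mul, Matrix.mul_smul]
    rw [List.reverse_cons, List.prod_append, List.prod_singleton, List.length_cons, List.prod_cons,
      hsign]
    exact hL'.mul hA

theorem trace_list_prod_reverse_of_isSkewAdjoint [DecidableEq n] {J : Matrix n n R}
    (hJ : IsUnit J) {L : List (Matrix n n R)} (hL : ∀ A ∈ L, J.IsSkewAdjoint A) :
    trace L.reverse.prod = (-1 : R) ^ L.length * trace L.prod := by
  rw [(isAdjointPair_list_prod_reverse hL).trace_eq hJ, trace_smul, smul_eq_mul]

theorem sum_perm_trace_list_ofFn_prod_eq_zero_of_isSkewAdjoint [NoZeroDivisors R] [CharZero R]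
    [DecidableEq n] {J : Matrix n n R} (hJ : IsUnit J) {k : ℕ} (hk : Odd k)
    (X : Fin k → Matrix n n R) (hX : ∀ i, J.IsSkewAdjoint (X i)) :
    ∑ σ : Perm (Fin k), (List.ofFn fun i => X (σ i)).prod.trace = 0 := by
  let f : Perm (Fin k) → R := fun σ => (List.ofFn fun i => X (σ i)).prod.trace
  have hrev (σ : Perm (Fin k)) : f (σ * Fin.revPerm) = -f σ := by
    have hL : ∀ A ∈ List.ofFn fun i => X (σ i), J.IsSkewAdjoint A := by
      simp only [List.mem_ofFn, forall_exists_index]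
      rintro _ i rfl
      exact hX _
    change (List.ofFn fun i => X (σ i.rev)).prod.trace = _
    rw [List.ofFn_comp_rev (fun i => X (σ i)), trace_list_prod_reverse_of_isSkewAdjoint hJ hL,
      List.length_ofFn, hk.neg_one_pow, neg_one_mul]
  have hsum := Equiv.sum_comp (Equiv.mulRight (Fin.revPerm : Perm (Fin k))) f
  simp only [coe_mulRight, hrev, Finset.sum_neg_distrib] at hsum
  exact CharZero.neg_eq_self_iff.1 hsum

end Matrix

-- `stdSymplecticMatrix r` is by definition the reindexing of Mathlib's `Matrix.J (Fin r) ℂ`.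
theorem isUnit_stdSymplecticMatrix (r : ℕ) : IsUnit (stdSymplecticMatrix r) :=
  ((isUnit_iff_isUnit_det _).2 (isUnit_det_J (Fin r) ℂ)).map (reindexAlgEquiv ℂ ℂ _)

theorem symmetrized_trace_odd_symplectic_eq_zero_general (r k : ℕ)
    (hk : Odd k)
    (X : Fin k → Matrix (Fin (2 * r)) (Fin (2 * r)) ℂ)
    (hX : ∀ i, (X i).transpose * stdSymplecticMatrix r = -(stdSymplecticMatrix r * X i)) :
    ∑ σ : Equiv.Perm (Fin k), ((List.ofFn fun i => X (σ i)).prod).trace = 0 :=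
  sum_perm_trace_list_ofFn_prod_eq_zero_of_isSkewAdjoint (isUnit_stdSymplecticMatrix r) hk X
    fun i => (hX i).trans (Matrix.mul_neg _ _).symm

theorem symmetrized_trace_odd_symplectic_eq_zero (r k : ℕ) (hr : 1 ≤ r)
    (hk : Odd k) (hk' : 0 < k)
    (X : Fin k → Matrix (Fin (2 * r)) (Fin (2 * r)) ℂ)
    (hX : ∀ i, (X i).transpose * stdSymplecticMatrix r = -(stdSymplecticMatrix r * X i)) :
    ∑ σ : Equiv.Perm (Fin k), ((List.ofFn fun i => X (σ i)).prod).trace = 0 :=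
  symmetrized_trace_odd_symplectic_eq_zero_general r k hk X hX
end

section
/- Let n ≥ 1 and k ≥ 0. Let f : (Matrix (Fin n) (Fin n) ℂ)^k → ℂ be a k-multilinear map such that f(g X₁ g⁻¹, …, g X_k g⁻¹) = f(X₁, …, X_k) for every invertible n×n complex matrix g and all X₁, …, X_k. Then f lies in the ℂ-linear span of the trace monomials T_σ, as σ ranges over all permutations of {1,…,k}. -/
/-!
Let `C` be the coefficient matrix of `f` on `(ℂⁿ)^{⊗k}`, so that
`f X = tr ((X₁ ⊗ ⋯ ⊗ X_k) Cᵀ)`. Invariance of `f` says exactly that `C` commutes with every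
`g^{⊗k}`, `g` invertible, and since invertible matrices are Zariski dense, with every `A^{⊗k}`.
By polarization (Ryser's formula for the permanent) the `A^{⊗k}` span the commutant of the
operators `P_σ` permuting the tensor factors, so `C` lies in the double commutant of the `P_σ`.
Averaging a projection over `S_k` (Maschke) shows that this double commutant is the span of the
`P_σ`, and the form with coefficient matrix `P_σ` is the trace monomial `T_σ`.
-/

open Finset Matrix

theorem Finset.sum_ite_subset_neg_one_pow_card_compl {α R : Type*} [Fintype α] [DecidableEq α]
    [Ring R] (t : Finset α) :
    ∑ s : Finset α, (if t ⊆ s then (-1 : R) ^ #sᶜ else 0) = if t = univ then 1 else 0 := by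
  calc ∑ s : Finset α, (if t ⊆ s then (-1 : R) ^ #sᶜ else 0)
      = ∑ u : Finset α, if u ⊆ tᶜ then (-1 : R) ^ #u else 0 :=
        Fintype.sum_bijective (·ᶜ) compl_bijective _ _ fun s => by
          simp only [compl_compl, subset_compl_comm (s := sᶜ)]
    _ = ((∑ u ∈ tᶜ.powerset, (-1 : ℤ) ^ #u : ℤ) : R) := by
        rw [← sum_filter, filter_subset_univ]; push_cast; rfl
    _ = if t = univ then 1 else 0 := by
        simp only [sum_powerset_neg_one_pow_card, compl_eq_empty_iff]; split_ifs <;> simp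

theorem Fintype.sum_perm_eq_sum_ite_surjective {n M : Type*} [Fintype n] [DecidableEq n]
    [AddCommMonoid M] (g : (n → n) → M) :
    ∑ σ : Equiv.Perm n, g σ = ∑ φ : n → n, if Function.Surjective φ then g φ else 0 := by
  classical
  rw [← sum_filter, ← sum_image fun σ _ τ _ h => DFunLike.coe_injective h]
  congr 1
  ext φ
  simp only [mem_image, mem_univ, true_and, mem_filter]
  exact ⟨fun ⟨σ, hσ⟩ => hσ ▸ σ.surjective,
    fun h => ⟨Equiv.ofBijective φ (Finite.surjective_iff_bijective.mp h), rfl⟩⟩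

theorem Matrix.permanent_eq_ryser {n R : Type*} [Fintype n] [DecidableEq n] [CommRing R]
    (M : Matrix n n R) :
    M.permanent = ∑ s : Finset n, (-1 : R) ^ #sᶜ * ∏ i, ∑ j ∈ s, M j i := by
  have hsurj (φ : n → n) : image φ univ = univ ↔ Function.Surjective φ := by
    simp [eq_univ_iff_forall, Function.Surjective]
  have hsub (φ : n → n) (s : Finset n) : image φ univ ⊆ s ↔ φ ∈ Fintype.piFinset fun _ => s := by
    simp [subset_iff]
  calc M.permanent
      = ∑ φ : n → n, (if image φ univ = univ then 1 else 0) * ∏ i, M (φ i) i := by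
        simp_rw [hsurj, ite_mul, one_mul, zero_mul]
        exact Fintype.sum_perm_eq_sum_ite_surjective fun φ => ∏ i, M (φ i) i
    _ = ∑ φ : n → n, ∑ s : Finset n,
          (if image φ univ ⊆ s then (-1 : R) ^ #sᶜ else 0) * ∏ i, M (φ i) i := by
        simp_rw [← sum_ite_subset_neg_one_pow_card_compl, sum_mul]
    _ = ∑ s : Finset n, (-1 : R) ^ #sᶜ * ∏ i, ∑ j ∈ s, M j i := by
        rw [sum_comm]
        refine sum_congr rfl fun s _ => ?_
        simp_rw [prod_univ_sum, mul_sum, hsub, ite_mul, zero_mul]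
        rw [← sum_filter, filter_mem_eq_inter, univ_inter]

namespace Matrix

variable {N R : Type*} [Fintype N] [DecidableEq N] [CommRing R]

/-- The block of `Φ` sending column `b'` of its argument to column `b` of its value. -/
def columnBlock (Φ : Matrix N N R →ₗ[R] Matrix N N R) (b b' : N) : Matrix N N R :=
  of fun x y => Φ (single y b' 1) x b

theorem linearMap_apply_eq_sum_columnBlock (Φ : Matrix N N R →ₗ[R] Matrix N N R)
    (X : Matrix N N R) (x b : N) : Φ X x b = ∑ b', (columnBlock Φ b b' * X) x b' := by
  have hX : X = ∑ y, ∑ b', X y b' • single y b' (1 : R) := by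
    simp_rw [smul_single, smul_eq_mul, mul_one]; exact matrix_eq_sum_single X
  conv_lhs => rw [hX]
  simp only [map_sum, map_smul, sum_apply, smul_apply, smul_eq_mul, mul_apply, columnBlock,
    of_apply]
  rw [sum_comm]
  exact sum_congr rfl fun _ _ => sum_congr rfl fun _ _ => mul_comm _ _

theorem columnBlock_mul_apply (Φ : Matrix N N R →ₗ[R] Matrix N N R) (M : Matrix N N R)
    (b b' x y : N) : (columnBlock Φ b b' * M) x y = Φ (M * single y b' 1) x b := by
  rw [linearMap_apply_eq_sum_columnBlock, sum_eq_single b']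
  · rw [← Matrix.mul_assoc, mul_single_apply_same, mul_one]
  · intro b'' _ hb''
    rw [← Matrix.mul_assoc, mul_single_apply_of_ne _ _ _ _ _ hb'']
  · simp

theorem mul_columnBlock_apply (Φ : Matrix N N R →ₗ[R] Matrix N N R) (M : Matrix N N R)
    (b b' x y : N) : (M * columnBlock Φ b b') x y = (M * Φ (single y b' 1)) x b := by
  simp only [mul_apply, columnBlock, of_apply]

theorem linearMap_mul_of_mem_centralizer_centralizer {S : Set (Matrix N N R)}
    {Φ : Matrix N N R →ₗ[R] Matrix N N R} (hΦ : ∀ M ∈ S, ∀ X, Φ (M * X) = M * Φ X)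
    {C : Matrix N N R} (hC : C ∈ S.centralizer.centralizer) (X : Matrix N N R) :
    Φ (C * X) = C * Φ X := by
  have hblock (b b' : N) : columnBlock Φ b b' ∈ S.centralizer := fun M hM => by
    ext x y
    rw [columnBlock_mul_apply, mul_columnBlock_apply, hΦ M hM]
  ext x b
  calc Φ (C * X) x b = ∑ b', (C * (columnBlock Φ b b' * X)) x b' := by
        simp_rw [linearMap_apply_eq_sum_columnBlock Φ, ← Matrix.mul_assoc,
          hC _ (hblock b _)]
    _ = ∑ z, C x z * Φ X z b := by
        simp_rw [mul_apply (M := C), linearMap_apply_eq_sum_columnBlock Φ X, mul_sum]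
        exact sum_comm
    _ = (C * Φ X) x b := (mul_apply ..).symm

variable {K G : Type*} [Field K] [Group G] [Fintype G]

theorem mem_span_range_of_mem_centralizer_centralizer (ρ : G →* Matrix N N K)
    (hG : (Fintype.card G : K) ≠ 0) {C : Matrix N N K}
    (hC : C ∈ (Set.range ρ).centralizer.centralizer) :
    C ∈ Submodule.span K (Set.range ρ) := by
  set A := Submodule.span K (Set.range ρ)
  have hA (g : G) {a : Matrix N N K} (ha : a ∈ A) : ρ g * a ∈ A := by
    refine Submodule.span_mono ?_
      (Submodule.apply_mem_span_image_of_mem_span (LinearMap.mulLeft K (ρ g)) ha)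
    rintro _ ⟨_, ⟨h, rfl⟩, rfl⟩
    exact ⟨g * h, map_mul ρ g h⟩
  obtain ⟨π, hπ⟩ := A.subtype.exists_leftInverse_of_injective A.ker_subtype
  have hπ_apply {a : Matrix N N K} (ha : a ∈ A) : (π a : Matrix N N K) = a :=
    congrArg Subtype.val (LinearMap.congr_fun hπ ⟨a, ha⟩)
  -- Maschke averaging of the projection `π` onto `A`
  let Φ : Matrix N N K →ₗ[K] Matrix N N K :=
    ∑ g, LinearMap.mulLeft K (ρ g) ∘ₗ A.subtype ∘ₗ π ∘ₗ LinearMap.mulLeft K (ρ g⁻¹)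
  have hΦ_apply (X : Matrix N N K) : Φ X = ∑ g, ρ g * π (ρ g⁻¹ * X) := by
    simp [Φ, LinearMap.sum_apply]
  have hΦ_equivariant : ∀ M ∈ Set.range ρ, ∀ X, Φ (M * X) = M * Φ X := by
    rintro _ ⟨h, rfl⟩ X
    rw [hΦ_apply, hΦ_apply, mul_sum]
    refine Fintype.sum_equiv (Equiv.mulLeft h⁻¹) _ _ fun g => ?_
    simp [← Matrix.mul_assoc, ← map_mul]
  have hΦ_one : Φ 1 = (Fintype.card G : K) • 1 := by
    simp [hΦ_apply, hπ_apply (Submodule.subset_span (Set.mem_range_self _)), ← map_mul,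
      Nat.cast_smul_eq_nsmul]
  have hΦC : Φ C = (Fintype.card G : K) • C := by
    simpa [hΦ_one] using linearMap_mul_of_mem_centralizer_centralizer hΦ_equivariant hC 1
  have hΦC_mem : Φ C ∈ A := by
    rw [hΦ_apply]
    exact Submodule.sum_mem _ fun g _ => hA g (π _).2
  rw [hΦC] at hΦC_mem
  exact (Submodule.smul_mem_iff _ hG).mp hΦC_mem

end Matrix

section KroneckerPower

variable {ι m R : Type*} [Fintype ι] [CommRing R]

def piKron (X : ι → Matrix m m R) : Matrix (ι → m) (ι → m) R :=
  of fun a b => ∏ i, X i (a i) (b i)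

theorem piKron_apply (X : ι → Matrix m m R) (a b : ι → m) :
    piKron X a b = ∏ i, X i (a i) (b i) := rfl

theorem piKron_map {S : Type*} [CommRing S] (f : R →+* S) (X : ι → Matrix m m R) :
    (piKron X).map f = piKron fun i => (X i).map f := by
  ext a b
  simp [piKron_apply, map_prod]

theorem piKron_mul [DecidableEq ι] [Fintype m] (X Y : ι → Matrix m m R) :
    piKron (fun i => X i * Y i) = piKron X * piKron Y := by
  ext a c
  simp only [piKron_apply, mul_apply, Fintype.prod_sum, prod_mul_distrib]

theorem piKron_single [DecidableEq m] (p q : ι → m) :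
    piKron (fun i => single (p i) (q i) (1 : R)) = single p q 1 := by
  ext a b
  simp [piKron_apply, single, prod_boole, funext_iff, forall_and]

variable (ι) in
def kronPow (A : Matrix m m R) : Matrix (ι → m) (ι → m) R :=
  piKron fun _ => A

theorem kronPow_transpose (A : Matrix m m R) : (kronPow ι A)ᵀ = kronPow ι Aᵀ := rfl

theorem kronPow_map {S : Type*} [CommRing S] (f : R →+* S) (A : Matrix m m R) :
    (kronPow ι A).map f = kronPow ι (A.map f) :=
  piKron_map f _

theorem kronPow_mul [DecidableEq ι] [Fintype m] (A B : Matrix m m R) :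
    kronPow ι (A * B) = kronPow ι A * kronPow ι B :=
  piKron_mul _ _

theorem kronPow_one [DecidableEq ι] [DecidableEq m] : kronPow ι (1 : Matrix m m R) = 1 := by
  ext a b
  simp [kronPow, piKron_apply, one_apply, prod_boole, funext_iff]

variable [DecidableEq ι] [DecidableEq m] [Fintype m]

def permTensor : Equiv.Perm ι →* Matrix (ι → m) (ι → m) R where
  toFun σ := of fun a b => if b = a ∘ σ then 1 else 0
  map_one' := by ext a b; simp [one_apply, eq_comm]
  map_mul' σ τ := by
    ext a c
    simp only [mul_apply, of_apply, boole_mul, sum_ite_eq', mem_univ, if_true, Equiv.Perm.coe_mul]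
    rfl

theorem permTensor_apply (σ : Equiv.Perm ι) (a b : ι → m) :
    (permTensor σ : Matrix (ι → m) (ι → m) R) a b = if b = a ∘ σ then 1 else 0 := rfl

theorem permTensor_mul_apply (σ : Equiv.Perm ι) (T : Matrix (ι → m) (ι → m) R) (a b : ι → m) :
    (permTensor σ * T : Matrix (ι → m) (ι → m) R) a b = T (a ∘ σ) b := by
  simp [mul_apply, permTensor_apply]

theorem mul_permTensor_apply (σ : Equiv.Perm ι) (T : Matrix (ι → m) (ι → m) R) (a b : ι → m) :
    (T * permTensor σ : Matrix (ι → m) (ι → m) R) a b = T a (b ∘ ⇑σ⁻¹) := by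
  simp [mul_apply, permTensor_apply, eq_comm (a := b), ← Equiv.eq_comp_symm]

theorem permTensor_mul_mul_inv_apply (σ : Equiv.Perm ι) (T : Matrix (ι → m) (ι → m) R)
    (a b : ι → m) :
    (permTensor σ * T * permTensor σ⁻¹ : Matrix (ι → m) (ι → m) R) a b = T (a ∘ σ) (b ∘ σ) := by
  rw [mul_permTensor_apply, permTensor_mul_apply, inv_inv]

theorem sum_permTensor_mul_single_mul_inv_apply (p q a b : ι → m) :
    (∑ σ, permTensor σ * single p q 1 * permTensor σ⁻¹ : Matrix (ι → m) (ι → m) R) a b =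
      (of fun j i => if a i = p j ∧ b i = q j then 1 else 0 : Matrix ι ι R).permanent := by
  rw [← permanent_transpose, permanent, Matrix.sum_apply]
  refine sum_congr rfl fun σ _ => ?_
  simp [permTensor_mul_mul_inv_apply, single, prod_boole, funext_iff, forall_and, eq_comm]

theorem sum_permTensor_mul_single_mul_inv_mem_span (p q : ι → m) :
    (∑ σ, permTensor σ * single p q 1 * permTensor σ⁻¹ : Matrix (ι → m) (ι → m) R) ∈
      Submodule.span R (Set.range (kronPow ι)) := by
  have hryser : (∑ σ, permTensor σ * single p q 1 * permTensor σ⁻¹ : Matrix (ι → m) (ι → m) R) =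
      ∑ s : Finset ι, (-1 : R) ^ #sᶜ • kronPow ι (∑ j ∈ s, single (p j) (q j) 1) := by
    ext a b
    rw [sum_permTensor_mul_single_mul_inv_apply, permanent_eq_ryser]
    simp [Matrix.sum_apply, kronPow, piKron_apply, single, eq_comm]
  rw [hryser]
  exact Submodule.sum_mem _ fun s _ => Submodule.smul_mem _ _ (Submodule.subset_span ⟨_, rfl⟩)

theorem card_perm_ne_zero (K : Type*) [Field K] [CharZero K] :
    (Fintype.card (Equiv.Perm ι) : K) ≠ 0 :=
  Nat.cast_ne_zero.mpr Fintype.card_ne_zero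

theorem mem_span_kronPow_of_mem_centralizer {K : Type*} [Field K] [CharZero K]
    {T : Matrix (ι → m) (ι → m) K} (hT : T ∈ (Set.range permTensor).centralizer) :
    T ∈ Submodule.span K (Set.range (kronPow ι)) := by
  have hsymm : (Fintype.card (Equiv.Perm ι) : K) • T =
      ∑ p, ∑ q, T p q • ∑ σ, permTensor σ * single p q 1 * permTensor σ⁻¹ := by
    calc (Fintype.card (Equiv.Perm ι) : K) • T = ∑ σ, permTensor σ * T * permTensor σ⁻¹ := by
          have hconj (σ : Equiv.Perm ι) : permTensor σ * T * permTensor σ⁻¹ = T := by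
            rw [hT _ ⟨σ, rfl⟩, Matrix.mul_assoc, ← map_mul, mul_inv_cancel, map_one, mul_one]
          simp [hconj, Nat.cast_smul_eq_nsmul]
      _ = ∑ σ, permTensor σ * (∑ p, ∑ q, T p q • single p q (1 : K)) * permTensor σ⁻¹ := by
          simp_rw [smul_single, smul_eq_mul, mul_one, ← matrix_eq_sum_single]
      _ = _ := by
          simp only [mul_sum, sum_mul, smul_sum, Matrix.mul_smul, Matrix.smul_mul]
          rw [sum_comm]
          exact sum_congr rfl fun _ _ => sum_comm
  refine (Submodule.smul_mem_iff _ (card_perm_ne_zero (ι := ι) K)).mp ?_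
  rw [hsymm]
  exact Submodule.sum_mem _ fun p _ => Submodule.sum_mem _ fun q _ =>
    Submodule.smul_mem _ _ (sum_permTensor_mul_single_mul_inv_mem_span p q)

theorem mem_span_permTensor_of_commute_kronPow {K : Type*} [Field K] [CharZero K]
    {C : Matrix (ι → m) (ι → m) K} (hC : ∀ A, Commute C (kronPow ι A)) :
    C ∈ Submodule.span K (Set.range permTensor) := by
  refine mem_span_range_of_mem_centralizer_centralizer permTensor (card_perm_ne_zero K)
    fun T hT => ?_
  have hle : Submodule.span K (Set.range (kronPow ι)) ≤
      (Subalgebra.centralizer K {C}).toSubmodule :=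
    Submodule.span_le.mpr <| by
      rintro _ ⟨A, rfl⟩ _ rfl
      exact (hC A).eq
  exact (hle (mem_span_kronPow_of_mem_centralizer hT) C rfl).symm

open Polynomial in
theorem commute_kronPow_of_forall_isUnit {K : Type*} [Field K] [Infinite K]
    {C : Matrix (ι → m) (ι → m) K} (hC : ∀ g : Matrix m m K, IsUnit g → Commute C (kronPow ι g))
    (A : Matrix m m K) : Commute C (kronPow ι A) := by
  let Q : Matrix m m K[X] := A.map Polynomial.C + scalar m X
  have hQ (t : K) : (evalRingHom t).mapMatrix Q = A + algebraMap K _ t := by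
    ext i j
    simp only [Q, RingHom.mapMatrix_apply, map_apply, Matrix.add_apply, coe_evalRingHom,
      algebraMap_eq_diagonal, scalar_apply, diagonal_apply]
    split_ifs <;> simp
  let P : Matrix (ι → m) (ι → m) K[X] :=
    C.map Polynomial.C * kronPow ι Q - kronPow ι Q * C.map Polynomial.C
  have hP (t : K) : (evalRingHom t).mapMatrix P =
      C * kronPow ι (A + algebraMap K _ t) - kronPow ι (A + algebraMap K _ t) * C := by
    have hCt : (evalRingHom t).mapMatrix (C.map Polynomial.C) = C := by ext; simp
    simp only [P, map_sub, map_mul, hCt, RingHom.mapMatrix_apply (M := kronPow ι Q), kronPow_map]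
    rw [← RingHom.mapMatrix_apply, hQ]
  have hP_zero : P = 0 := by
    refine Matrix.ext fun a b => ?_
    rw [Matrix.zero_apply]
    refine Polynomial.eq_zero_of_infinite_isRoot _ <|
      (Matrix.finite_spectrum (-A)).infinite_compl.mono fun t ht => ?_
    have hunit : IsUnit (A + algebraMap K _ t) := by
      simpa [spectrum.mem_iff, add_comm] using ht
    have hPt : eval t (P a b) = _ := congr_fun₂ (hP t) a b
    change eval t (P a b) = 0
    rw [hPt, (hC _ hunit).eq, sub_self, Matrix.zero_apply]
  have hP0 := hP 0
  rwa [hP_zero, map_zero, map_zero, add_zero, eq_comm, sub_eq_zero] at hP0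

end KroneckerPower

section MultilinearForm

variable {ι m R : Type*} [Fintype ι] [DecidableEq ι] [Fintype m] [DecidableEq m] [CommRing R]

def traceMonomial (σ : Equiv.Perm ι) (X : ι → Matrix m m R) : R :=
  ∑ j : ι → m, ∏ i, X i (j i) (j (σ i))

def coeffMatrix (f : MultilinearMap R (fun _ : ι => Matrix m m R) R) :
    Matrix (ι → m) (ι → m) R :=
  of fun a b => f fun i => single (a i) (b i) 1

-- `ofCoeffMatrix C X = ∑ a b, (X₁ ⊗ ⋯ ⊗ X_k) a b * C a b`
def ofCoeffMatrix : Matrix (ι → m) (ι → m) R →ₗ[R] (ι → Matrix m m R) → R where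
  toFun C X := trace (piKron X * Cᵀ)
  map_add' _ _ := by ext; simp [Matrix.mul_add]
  map_smul' _ _ := by ext; simp

theorem ofCoeffMatrix_apply (C : Matrix (ι → m) (ι → m) R) (X : ι → Matrix m m R) :
    ofCoeffMatrix C X = trace (piKron X * Cᵀ) := rfl

theorem ofCoeffMatrix_single (C : Matrix (ι → m) (ι → m) R) (p q : ι → m) :
    ofCoeffMatrix C (fun i => single (p i) (q i) 1) = C p q := by
  rw [ofCoeffMatrix_apply, piKron_single, trace_single_mul, one_smul, transpose_apply]

theorem ofCoeffMatrix_conj (C : Matrix (ι → m) (ι → m) R) (P Q : Matrix m m R)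
    (X : ι → Matrix m m R) :
    ofCoeffMatrix C (fun i => P * X i * Q) =
      ofCoeffMatrix ((kronPow ι P)ᵀ * C * (kronPow ι Q)ᵀ) X := by
  have hkron : piKron (fun i => P * X i * Q) = kronPow ι P * piKron X * kronPow ι Q := by
    rw [piKron_mul (fun i => P * X i) (fun _ => Q), piKron_mul (fun _ => P) X]; rfl
  rw [ofCoeffMatrix_apply, ofCoeffMatrix_apply, hkron, transpose_mul, transpose_mul,
    transpose_transpose, transpose_transpose, Matrix.mul_assoc, Matrix.mul_assoc, trace_mul_comm,
    Matrix.mul_assoc, Matrix.mul_assoc]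

theorem ofCoeffMatrix_coeffMatrix (f : MultilinearMap R (fun _ : ι => Matrix m m R) R) :
    ofCoeffMatrix (coeffMatrix f) = ⇑f := by
  ext X
  have hX : X = fun i => ∑ r : m × m, X i r.1 r.2 • single r.1 r.2 1 := by
    funext i
    rw [Fintype.sum_prod_type' (f := fun p q => X i p q • single p q (1 : R))]
    simp_rw [smul_single, smul_eq_mul, mul_one]
    exact matrix_eq_sum_single (X i)
  calc ofCoeffMatrix (coeffMatrix f) X
      = ∑ a, ∑ b, piKron X a b * f (fun i => single (a i) (b i) 1) := by
        simp [ofCoeffMatrix_apply, trace, mul_apply, coeffMatrix]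
    _ = ∑ r : ι → m × m, (∏ i, X i (r i).1 (r i).2) * f fun i => single (r i).1 (r i).2 1 := by
        rw [← Fintype.sum_prod_type']
        exact Fintype.sum_equiv (Equiv.arrowProdEquivProdArrow ι _ _).symm _ _ fun _ => rfl
    _ = f X := by
        conv_rhs => rw [hX]
        simp_rw [f.map_sum, f.map_smul_univ, smul_eq_mul]

theorem ofCoeffMatrix_permTensor (σ : Equiv.Perm ι) :
    ofCoeffMatrix (permTensor σ) = traceMonomial (R := R) (m := m) σ := by
  ext X
  simp [ofCoeffMatrix_apply, trace, mul_apply, permTensor_apply, traceMonomial, piKron_apply]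

theorem commute_coeffMatrix_kronPow {f : MultilinearMap R (fun _ : ι => Matrix m m R) R}
    (hf : ∀ g : Matrix m m R, IsUnit g → ∀ X : ι → Matrix m m R,
      (f fun i => g * X i * g⁻¹) = f X)
    {g : Matrix m m R} (hg : IsUnit g) : Commute (coeffMatrix f) (kronPow ι g) := by
  have hconj : kronPow ι g * coeffMatrix f * kronPow ι g⁻¹ = coeffMatrix f := by
    ext p q
    have hsingle := hf gᵀ ((isUnit_transpose g).mpr hg) fun i => single (p i) (q i) 1
    rwa [← ofCoeffMatrix_coeffMatrix, ofCoeffMatrix_conj, ofCoeffMatrix_single,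
      ofCoeffMatrix_single, kronPow_transpose, kronPow_transpose, transpose_transpose,
      ← transpose_nonsing_inv, transpose_transpose] at hsingle
  have hinv : kronPow ι g⁻¹ * kronPow ι g = 1 := by
    rw [← kronPow_mul, nonsing_inv_mul _ ((isUnit_iff_isUnit_det g).mp hg), kronPow_one]
  calc coeffMatrix f * kronPow ι g
      = kronPow ι g * coeffMatrix f * kronPow ι g⁻¹ * kronPow ι g := by rw [hconj]
    _ = kronPow ι g * coeffMatrix f := by rw [Matrix.mul_assoc, hinv, Matrix.mul_one]

end MultilinearForm

theorem gl_invariant_multilinear_mem_span_trace_monomials_general (n k : ℕ)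
    (f : MultilinearMap ℂ (fun _ : Fin k => Matrix (Fin n) (Fin n) ℂ) ℂ)
    (hf : ∀ g : Matrix (Fin n) (Fin n) ℂ, IsUnit g →
      ∀ X : Fin k → Matrix (Fin n) (Fin n) ℂ,
        (f fun i => g * X i * g⁻¹) = f X) :
    ⇑f ∈ Submodule.span ℂ
      {h : (Fin k → Matrix (Fin n) (Fin n) ℂ) → ℂ |
        ∃ σ : Equiv.Perm (Fin k),
          h = fun X => ∑ j : Fin k → Fin n, ∏ i : Fin k,
            X i (j i) (j (σ i))} := by
  have hcomm : ∀ A, Commute (coeffMatrix f) (kronPow (Fin k) A) :=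
    commute_kronPow_of_forall_isUnit fun _ hg => commute_coeffMatrix_kronPow hf hg
  have hf_mem := Submodule.apply_mem_span_image_of_mem_span ofCoeffMatrix
    (mem_span_permTensor_of_commute_kronPow hcomm)
  rw [ofCoeffMatrix_coeffMatrix] at hf_mem
  refine Submodule.span_mono ?_ hf_mem
  rintro _ ⟨_, ⟨σ, rfl⟩, rfl⟩
  exact ⟨σ, ofCoeffMatrix_permTensor σ⟩

theorem gl_invariant_multilinear_mem_span_trace_monomials (n k : ℕ) (hn : 1 ≤ n)
    (f : MultilinearMap ℂ (fun _ : Fin k => Matrix (Fin n) (Fin n) ℂ) ℂ)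
    (hf : ∀ g : Matrix (Fin n) (Fin n) ℂ, IsUnit g →
      ∀ X : Fin k → Matrix (Fin n) (Fin n) ℂ,
        (f fun i => g * X i * g⁻¹) = f X) :
    ⇑f ∈ Submodule.span ℂ
      {h : (Fin k → Matrix (Fin n) (Fin n) ℂ) → ℂ |
        ∃ σ : Equiv.Perm (Fin k),
          h = fun X => ∑ j : Fin k → Fin n, ∏ i : Fin k,
            X i (j i) (j (σ i))} :=
  gl_invariant_multilinear_mem_span_trace_monomials_general n k f hf
end
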